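/- arXiv:1209.1783 — 4 statements merged into one kernel-verified Lean document; each statement's English description precedes it below -/
import Mathlib

section
/- Let ζ = e^{2πi/13}. Then ζ + ζ¹² + ζ³ + ζ¹⁰ + ζ⁹ + ζ⁴ - ζ⁵ - ζ⁸ - ζ² - ζ¹¹ - ζ⁶ - ζ⁷ = √13. -/
theorem gauss_sum_thirteen :
    let ζ : ℂ := Complex.exp (2 * Real.pi * Complex.I / 13)
    ζ + ζ^12 + ζ^3 + ζ^10 + ζ^9 + ζ^4 - ζ^5 - ζ^8 - ζ^2 - ζ^11 - ζ^6 - ζ^7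
      = (Real.sqrt 13 : ℂ) := by
  intro ζ
  set θ : ℝ := 2 * Real.pi / 13 with hθdef
  have harg : 2 * (Real.pi:ℂ) * Complex.I / 13 = (θ:ℂ) * Complex.I := by
    rw [hθdef]; push_cast; ring
  have hζ : ζ = Complex.exp ((θ:ℂ) * Complex.I) := by
    show Complex.exp _ = _
    rw [harg]
  have hζk : ∀ k : ℕ, ζ ^ k = Complex.exp (((k * θ : ℝ):ℂ) * Complex.I) := by
    intro k
    rw [hζ, ← Complex.exp_nat_mul]
    congr 1
    push_cast
    ring
  have hre : ∀ k : ℕ, (ζ ^ k).re = Real.cos (k * θ) := by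
    intro k
    rw [hζk k, Complex.exp_ofReal_mul_I_re]
  have hπ := Real.pi_pos
  have hθpos : 0 < θ := by rw [hθdef]; positivity
  have h13 : ζ^13 = 1 := by
    rw [hζk 13, show ((((13:ℕ):ℝ) * θ : ℝ):ℂ) * Complex.I = 2 * Real.pi * Complex.I by
      rw [hθdef]; push_cast; ring]
    exact Complex.exp_two_pi_mul_I
  have hne : ζ ≠ 1 := by
    intro h
    have him : ζ.im = Real.sin θ := by
      rw [hζ, Complex.exp_ofReal_mul_I_im]
    have hsinpos : 0 < Real.sin θ := by
      apply Real.sin_pos_of_pos_of_lt_pi hθpos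
      rw [hθdef]
      nlinarith
    rw [h] at him
    simp at him
    linarith [him ▸ hsinpos]
  have hsum : (1:ℂ) + ζ + ζ^2 + ζ^3 + ζ^4 + ζ^5 + ζ^6 + ζ^7 + ζ^8 + ζ^9 + ζ^10 + ζ^11 + ζ^12 = 0 := by
    have h := sub_ne_zero.mpr hne
    have key : (ζ - 1) * ((1:ℂ) + ζ + ζ^2 + ζ^3 + ζ^4 + ζ^5 + ζ^6 + ζ^7 + ζ^8 + ζ^9 + ζ^10 + ζ^11 + ζ^12) = 0 := by
      linear_combination h13
    rcases mul_eq_zero.mp key with h0 | h0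
    · exact absurd h0 h
    · exact h0
  set S : ℂ := ζ + ζ^12 + ζ^3 + ζ^10 + ζ^9 + ζ^4 - ζ^5 - ζ^8 - ζ^2 - ζ^11 - ζ^6 - ζ^7 with hS
  have hsq : S^2 = 13 := by
    rw [hS]
    linear_combination (ζ^11 - 2*ζ^10 + 3*ζ^9 - 3*ζ^7 + 2*ζ^6 - ζ^5 - 4*ζ^4 + ζ^3 - 2*ζ^2 - ζ + 12) * h13 - hsum
  -- S.re > 0
  have hrepos : 0 < S.re := by
    have hSre : S.re = Real.cos (1*θ) + Real.cos (12*θ) + Real.cos (3*θ) + Real.cos (10*θ)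
        + Real.cos (9*θ) + Real.cos (4*θ) - Real.cos (5*θ) - Real.cos (8*θ) - Real.cos (2*θ)
        - Real.cos (11*θ) - Real.cos (6*θ) - Real.cos (7*θ) := by
      have hre1 : ζ.re = Real.cos (1*θ) := by
        rw [hζ, Complex.exp_ofReal_mul_I_re]; norm_num
      rw [hS]
      simp only [Complex.sub_re, Complex.add_re, hre 2, hre 3, hre 4, hre 5, hre 6, hre 7,
        hre 8, hre 9, hre 10, hre 11, hre 12, hre1]
      norm_num
    have hsym : ∀ k : ℝ, Real.cos ((13 - k)*θ) = Real.cos (k*θ) := by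
      intro k
      rw [show (13 - k)*θ = 2*Real.pi - k*θ by rw [hθdef]; ring]
      exact Real.cos_two_pi_sub _
    have h12 : Real.cos (12*θ) = Real.cos (1*θ) := by
      have := hsym 1; norm_num at this ⊢; exact this
    have h10 : Real.cos (10*θ) = Real.cos (3*θ) := by
      have := hsym 3; norm_num at this ⊢; exact this
    have h9 : Real.cos (9*θ) = Real.cos (4*θ) := by
      have := hsym 4; norm_num at this ⊢; exact this
    have h8 : Real.cos (8*θ) = Real.cos (5*θ) := by
      have := hsym 5; norm_num at this ⊢; exact this
    have h11 : Real.cos (11*θ) = Real.cos (2*θ) := by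
      have := hsym 2; norm_num at this ⊢; exact this
    have h7 : Real.cos (7*θ) = Real.cos (6*θ) := by
      have := hsym 6; norm_num at this ⊢; exact this
    rw [hSre, h12, h10, h9, h8, h11, h7]
    have hmono : ∀ a b : ℝ, 0 ≤ a → a < b → b ≤ Real.pi → Real.cos b < Real.cos a := by
      intro a b ha hab hb
      exact Real.strictAntiOn_cos ⟨ha, by linarith⟩ ⟨by linarith, hb⟩ hab
    have h6π : 6 * θ ≤ Real.pi := by rw [hθdef]; nlinarith
    have d1 : Real.cos (2*θ) < Real.cos (1*θ) := hmono _ _ (by positivity) (by linarith) (by linarith)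
    have d2 : Real.cos (5*θ) < Real.cos (3*θ) := hmono _ _ (by positivity) (by linarith) (by linarith)
    have d3 : Real.cos (6*θ) < Real.cos (4*θ) := hmono _ _ (by positivity) (by linarith) (by linarith)
    linarith
  -- conclude
  have hsqrt : ((Real.sqrt 13 : ℝ):ℂ)^2 = 13 := by
    norm_cast
    rw [Real.sq_sqrt]
    norm_num
  have hfact : (S - (Real.sqrt 13:ℝ)) * (S + (Real.sqrt 13:ℝ)) = 0 := by
    linear_combination hsq - hsqrt
  rcases mul_eq_zero.mp hfact with h0 | h0
  · exact sub_eq_zero.mp h0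
  · exfalso
    have hSval : S = -((Real.sqrt 13:ℝ):ℂ) := by linear_combination h0
    have : S.re = -(Real.sqrt 13) := by rw [hSval]; simp
    have hsp : 0 < Real.sqrt 13 := Real.sqrt_pos.mpr (by norm_num)
    linarith [this ▸ hrepos]
end

section
/- With θ₁,θ₂,θ₃,θ₄ the cubic-residue period sums of ζ = e^{2πi/13}, one has θ₁ + θ₃ - θ₂ - θ₄ = √13, θ₁ - θ₃ - θ₂ + θ₄ = -√(-13 + 2√13), and θ₁ - θ₃ + θ₂ - θ₄ = √(-13 - 2√13). -/
private lemma alg1 (z : ℂ) (h13 : z^13 = 1)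
    (hs : 1 + z + z^2 + z^3 + z^4 + z^5 + z^6 + z^7 + z^8 + z^9 + z^10 + z^11 + z^12 = 0) :
    ((z + z^3 + z^9) + (z^4 + z^12 + z^10) - (z^2 + z^6 + z^5) - (z^8 + z^11 + z^7))^2 = 13 := by
  linear_combination (12 - z - 2*z^2 + z^3 - 4*z^4 - z^5 + 2*z^6 - 3*z^7 + 3*z^9 - 2*z^10 + z^11) * h13 - hs

private lemma alg2 (z : ℂ) (h13 : z^13 = 1)
    (hs : 1 + z + z^2 + z^3 + z^4 + z^5 + z^6 + z^7 + z^8 + z^9 + z^10 + z^11 + z^12 = 0) :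
    ((z + z^3 + z^9) - (z^4 + z^12 + z^10) - (z^2 + z^6 + z^5) + (z^8 + z^11 + z^7))^2
      = 2 * ((z + z^3 + z^9) + (z^4 + z^12 + z^10) - (z^2 + z^6 + z^5) - (z^8 + z^11 + z^7)) - 13 := by
  linear_combination (-12 + 3*z - 2*z^2 + 5*z^3 + 3*z^5 - 2*z^6 + z^7 - 4*z^8 + 3*z^9 - 2*z^10 + z^11) * h13 + hs

private lemma alg3 (z : ℂ) (h13 : z^13 = 1)
    (hs : 1 + z + z^2 + z^3 + z^4 + z^5 + z^6 + z^7 + z^8 + z^9 + z^10 + z^11 + z^12 = 0) :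
    ((z + z^3 + z^9) - (z^4 + z^12 + z^10) + (z^2 + z^6 + z^5) - (z^8 + z^11 + z^7))^2
      = -2 * ((z + z^3 + z^9) + (z^4 + z^12 + z^10) - (z^2 + z^6 + z^5) - (z^8 + z^11 + z^7)) - 13 := by
  linear_combination (-12 - z + 2*z^2 - 3*z^3 - 4*z^4 + 3*z^5 + 2*z^6 + z^7 + 3*z^9 + 2*z^10 + z^11) * h13 + hs

set_option maxHeartbeats 2000000 in
private lemma theta_main (z : ℂ) (hz_def : z = Complex.exp (2 * Real.pi * Complex.I / 13)) :
    (z + z^3 + z^9) + (z^4 + z^12 + z^10) - (z^2 + z^6 + z^5) - (z^8 + z^11 + z^7) = (Real.sqrt 13 : ℂ) ∧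
    (z + z^3 + z^9) - (z^4 + z^12 + z^10) - (z^2 + z^6 + z^5) + (z^8 + z^11 + z^7)
      = -(Complex.I * (Real.sqrt (13 - 2 * Real.sqrt 13) : ℂ)) ∧
    (z + z^3 + z^9) - (z^4 + z^12 + z^10) + (z^2 + z^6 + z^5) - (z^8 + z^11 + z^7)
      = Complex.I * (Real.sqrt (13 + 2 * Real.sqrt 13) : ℂ) := by
  have pi_pos := Real.pi_pos
  set a : ℝ := 2 * Real.pi / 13 with ha
  have h13a : 13 * a = 2 * Real.pi := by rw [ha]; ring
  have hz13 : z ^ 13 = 1 := by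
    rw [hz_def, ← Complex.exp_nat_mul]
    rw [show ((13 : ℕ) : ℂ) * (2 * (Real.pi : ℂ) * Complex.I / 13) = 2 * Real.pi * Complex.I by
      push_cast; ring]
    exact Complex.exp_two_pi_mul_I
  have hk : ∀ k : ℕ, z ^ k = Complex.exp ((k * a : ℝ) * Complex.I) := by
    intro k
    rw [hz_def, ← Complex.exp_nat_mul]
    congr 1
    rw [ha]
    push_cast
    ring
  have hre : ∀ k : ℕ, (z ^ k).re = Real.cos (k * a) := fun k => by
    rw [hk k, Complex.exp_ofReal_mul_I_re]
  have him : ∀ k : ℕ, (z ^ k).im = Real.sin (k * a) := fun k => by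
    rw [hk k, Complex.exp_ofReal_mul_I_im]
  have ha_pos : 0 < a := by rw [ha]; positivity
  have hapi : a < Real.pi := by rw [ha]; linarith only [pi_pos]
  have hsina : 0 < Real.sin a := Real.sin_pos_of_pos_of_lt_pi ha_pos hapi
  have hzne : z ≠ 1 := by
    intro h
    have h1 : (z ^ 1).im = Real.sin ((1 : ℕ) * a) := him 1
    rw [pow_one, h] at h1
    simp at h1
    linarith only [h1, hsina]
  have hsum : 1 + z + z^2 + z^3 + z^4 + z^5 + z^6 + z^7 + z^8 + z^9 + z^10 + z^11 + z^12 = 0 := by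
    rcases mul_eq_zero.mp (show (z - 1) * (1 + z + z^2 + z^3 + z^4 + z^5 + z^6 + z^7 + z^8 + z^9 + z^10 + z^11 + z^12) = 0 from by linear_combination hz13) with h | h
    · exact absurd (sub_eq_zero.mp h) hzne
    · exact h
  have hA2 := alg1 z hz13 hsum
  have hB2 := alg2 z hz13 hsum
  have hC2 := alg3 z hz13 hsum
  -- component lemmas
  have c1 : z.re = Real.cos a := by have h := hre 1; push_cast at h; rwa [pow_one, one_mul] at h
  have s1 : z.im = Real.sin a := by have h := him 1; push_cast at h; rwa [pow_one, one_mul] at h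
  have c2 : (z^2).re = Real.cos (2*a) := by have h := hre 2; push_cast at h; exact h
  have c3 : (z^3).re = Real.cos (3*a) := by have h := hre 3; push_cast at h; exact h
  have c4 : (z^4).re = Real.cos (4*a) := by have h := hre 4; push_cast at h; exact h
  have c5 : (z^5).re = Real.cos (5*a) := by have h := hre 5; push_cast at h; exact h
  have c6 : (z^6).re = Real.cos (6*a) := by have h := hre 6; push_cast at h; exact h
  have s2 : (z^2).im = Real.sin (2*a) := by have h := him 2; push_cast at h; exact h
  have s3 : (z^3).im = Real.sin (3*a) := by have h := him 3; push_cast at h; exact h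
  have s4 : (z^4).im = Real.sin (4*a) := by have h := him 4; push_cast at h; exact h
  have s5 : (z^5).im = Real.sin (5*a) := by have h := him 5; push_cast at h; exact h
  have s6 : (z^6).im = Real.sin (6*a) := by have h := him 6; push_cast at h; exact h
  have c7 : (z^7).re = Real.cos (6*a) := by
    have h := hre 7; push_cast at h
    rw [h, show (7:ℝ)*a = 2*Real.pi - 6*a from by linarith only [h13a], Real.cos_two_pi_sub]
  have c8 : (z^8).re = Real.cos (5*a) := by
    have h := hre 8; push_cast at h
    rw [h, show (8:ℝ)*a = 2*Real.pi - 5*a from by linarith only [h13a], Real.cos_two_pi_sub]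
  have c9 : (z^9).re = Real.cos (4*a) := by
    have h := hre 9; push_cast at h
    rw [h, show (9:ℝ)*a = 2*Real.pi - 4*a from by linarith only [h13a], Real.cos_two_pi_sub]
  have c10 : (z^10).re = Real.cos (3*a) := by
    have h := hre 10; push_cast at h
    rw [h, show (10:ℝ)*a = 2*Real.pi - 3*a from by linarith only [h13a], Real.cos_two_pi_sub]
  have c11 : (z^11).re = Real.cos (2*a) := by
    have h := hre 11; push_cast at h
    rw [h, show (11:ℝ)*a = 2*Real.pi - 2*a from by linarith only [h13a], Real.cos_two_pi_sub]
  have c12 : (z^12).re = Real.cos a := by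
    have h := hre 12; push_cast at h
    rw [h, show (12:ℝ)*a = 2*Real.pi - a from by linarith only [h13a], Real.cos_two_pi_sub]
  have s7 : (z^7).im = -Real.sin (6*a) := by
    have h := him 7; push_cast at h
    rw [h, show (7:ℝ)*a = 2*Real.pi - 6*a from by linarith only [h13a], Real.sin_two_pi_sub]
  have s8 : (z^8).im = -Real.sin (5*a) := by
    have h := him 8; push_cast at h
    rw [h, show (8:ℝ)*a = 2*Real.pi - 5*a from by linarith only [h13a], Real.sin_two_pi_sub]
  have s9 : (z^9).im = -Real.sin (4*a) := by
    have h := him 9; push_cast at h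
    rw [h, show (9:ℝ)*a = 2*Real.pi - 4*a from by linarith only [h13a], Real.sin_two_pi_sub]
  have s10 : (z^10).im = -Real.sin (3*a) := by
    have h := him 10; push_cast at h
    rw [h, show (10:ℝ)*a = 2*Real.pi - 3*a from by linarith only [h13a], Real.sin_two_pi_sub]
  have s11 : (z^11).im = -Real.sin (2*a) := by
    have h := him 11; push_cast at h
    rw [h, show (11:ℝ)*a = 2*Real.pi - 2*a from by linarith only [h13a], Real.sin_two_pi_sub]
  have s12 : (z^12).im = -Real.sin a := by
    have h := him 12; push_cast at h
    rw [h, show (12:ℝ)*a = 2*Real.pi - a from by linarith only [h13a], Real.sin_two_pi_sub]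
  obtain ⟨A, hAdef⟩ : ∃ w : ℂ, w = (z + z^3 + z^9) + (z^4 + z^12 + z^10) - (z^2 + z^6 + z^5) - (z^8 + z^11 + z^7) := ⟨_, rfl⟩
  obtain ⟨B, hBdef⟩ : ∃ w : ℂ, w = (z + z^3 + z^9) - (z^4 + z^12 + z^10) - (z^2 + z^6 + z^5) + (z^8 + z^11 + z^7) := ⟨_, rfl⟩
  obtain ⟨C, hCdef⟩ : ∃ w : ℂ, w = (z + z^3 + z^9) - (z^4 + z^12 + z^10) + (z^2 + z^6 + z^5) - (z^8 + z^11 + z^7) := ⟨_, rfl⟩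
  rw [← hAdef] at hA2 hB2 hC2
  rw [← hBdef] at hB2
  rw [← hCdef] at hC2
  have hAre : A.re = 2*(Real.cos a + Real.cos (3*a) + Real.cos (4*a))
      - 2*(Real.cos (2*a) + Real.cos (5*a) + Real.cos (6*a)) := by
    rw [hAdef]
    simp only [Complex.add_re, Complex.sub_re, c1, c2, c3, c4, c5, c6, c7, c8, c9, c10, c11, c12]
    ring
  have hAim : A.im = 0 := by
    rw [hAdef]
    simp only [Complex.add_im, Complex.sub_im, s1, s2, s3, s4, s5, s6, s7, s8, s9, s10, s11, s12]
    ring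
  have hBre : B.re = 0 := by
    rw [hBdef]
    simp only [Complex.add_re, Complex.sub_re, c1, c2, c3, c4, c5, c6, c7, c8, c9, c10, c11, c12]
    ring
  have hBim : B.im = 2*(Real.sin a + Real.sin (3*a) - Real.sin (4*a))
      - 2*(Real.sin (2*a) + Real.sin (5*a) + Real.sin (6*a)) := by
    rw [hBdef]
    simp only [Complex.add_im, Complex.sub_im, s1, s2, s3, s4, s5, s6, s7, s8, s9, s10, s11, s12]
    ring
  have hCre : C.re = 0 := by
    rw [hCdef]
    simp only [Complex.add_re, Complex.sub_re, c1, c2, c3, c4, c5, c6, c7, c8, c9, c10, c11, c12]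
    ring
  have hCim : C.im = 2*(Real.sin a + Real.sin (3*a) - Real.sin (4*a))
      + 2*(Real.sin (2*a) + Real.sin (5*a) + Real.sin (6*a)) := by
    rw [hCdef]
    simp only [Complex.add_im, Complex.sub_im, s1, s2, s3, s4, s5, s6, s7, s8, s9, s10, s11, s12]
    ring
  -- sqrt facts
  have hs13 : Real.sqrt 13 ^ 2 = 13 := Real.sq_sqrt (by norm_num)
  have hs13nn : (0:ℝ) ≤ Real.sqrt 13 := Real.sqrt_nonneg 13
  have hs13lt : Real.sqrt 13 < 3.61 := (Real.sqrt_lt' (by norm_num)).mpr (by norm_num)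
  have hs13gt : (3:ℝ) < Real.sqrt 13 := (Real.lt_sqrt (by norm_num)).mpr (by norm_num)
  have hs3 : Real.sqrt 3 ^ 2 = 3 := Real.sq_sqrt (by norm_num)
  have hs3gt : (1.73:ℝ) < Real.sqrt 3 := (Real.lt_sqrt (by norm_num)).mpr (by norm_num)
  have hs3lt : Real.sqrt 3 < 2 := (Real.sqrt_lt' (by norm_num)).mpr (by norm_num)
  -- trig inequalities
  have hcos1 : 0 < Real.cos a := Real.cos_pos_of_mem_Ioo ⟨by linarith, by linarith only [h13a, pi_pos]⟩
  have hcos3 : 0 < Real.cos (3*a) := Real.cos_pos_of_mem_Ioo ⟨by linarith, by linarith only [h13a, pi_pos]⟩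
  have hcos2 : Real.cos (2*a) ≤ 1 := Real.cos_le_one _
  have hcos5 : Real.cos (5*a) ≤ 0 :=
    Real.cos_nonpos_of_pi_div_two_le_of_le (by linarith only [h13a, pi_pos]) (by linarith only [h13a, pi_pos])
  have hcos6 : Real.cos (6*a) ≤ 0 :=
    Real.cos_nonpos_of_pi_div_two_le_of_le (by linarith only [h13a, pi_pos]) (by linarith only [h13a, pi_pos])
  have hcos23 : Real.cos (2*Real.pi/3) = -(1/2) := by
    rw [show (2*Real.pi/3 : ℝ) = Real.pi - Real.pi/3 by ring, Real.cos_pi_sub,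
      Real.cos_pi_div_three]
  have hcos4 : -(1/2) < Real.cos (4*a) := by
    have h := Real.strictAntiOn_cos (Set.mem_Icc.mpr ⟨by linarith, by linarith only [h13a, pi_pos]⟩)
      (Set.mem_Icc.mpr ⟨by linarith, by linarith only [h13a, pi_pos]⟩) (show 4*a < 2*Real.pi/3 by linarith only [h13a, pi_pos])
    rw [hcos23] at h
    exact h
  have hsin2 : 0 ≤ Real.sin (2*a) := Real.sin_nonneg_of_nonneg_of_le_pi (by linarith only [h13a, pi_pos]) (by linarith only [h13a, pi_pos])
  have hsin5 : 0 ≤ Real.sin (5*a) := Real.sin_nonneg_of_nonneg_of_le_pi (by linarith only [h13a, pi_pos]) (by linarith only [h13a, pi_pos])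
  have hsin6 : 0 ≤ Real.sin (6*a) := Real.sin_nonneg_of_nonneg_of_le_pi (by linarith only [h13a, pi_pos]) (by linarith only [h13a, pi_pos])
  have hsin3 : 0 ≤ Real.sin (3*a) := Real.sin_nonneg_of_nonneg_of_le_pi (by linarith only [h13a, pi_pos]) (by linarith only [h13a, pi_pos])
  have hsin1le : Real.sin a ≤ 1 := Real.sin_le_one a
  have hsin3le : Real.sin (3*a) ≤ 1 := Real.sin_le_one _
  have hsin4le : Real.sin (4*a) ≤ 1 := Real.sin_le_one _
  have hsin4 : Real.sqrt 3 / 2 < Real.sin (4*a) := by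
    rw [show (4:ℝ)*a = Real.pi - 5*Real.pi/13 from by rw [ha]; ring, Real.sin_pi_sub]
    have h := Real.strictMonoOn_sin (Set.mem_Icc.mpr ⟨by linarith, by linarith only [h13a, pi_pos]⟩)
      (Set.mem_Icc.mpr ⟨by linarith, by linarith only [h13a, pi_pos]⟩)
      (show Real.pi/3 < 5*Real.pi/13 by linarith only [pi_pos])
    rw [Real.sin_pi_div_three] at h
    exact h
  -- A = sqrt 13
  have hAc : A = ((A.re : ℝ) : ℂ) := Complex.ext (by simp) (by simp [hAim])
  have hA13 : A.re ^ 2 = 13 := by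
    have h2 : ((A.re : ℝ) : ℂ)^2 = 13 := by rw [← hAc]; exact hA2
    exact_mod_cast h2
  have hAgt : -3 < A.re := by rw [hAre]; linarith only [hcos1, hcos3, hcos4, hcos2, hcos5, hcos6]
  have hAval : A.re = Real.sqrt 13 := by
    rcases mul_eq_zero.mp (show (A.re - Real.sqrt 13)*(A.re + Real.sqrt 13) = 0 from by
      linear_combination hA13 - hs13) with h | h
    · linarith only [sub_eq_zero.mp h]
    · exfalso; have h' : A.re = -Real.sqrt 13 := by linarith only [h]
      linarith only [h', hs13gt, hAgt]
  have goal1 : A = (Real.sqrt 13 : ℂ) := by rw [hAc, hAval]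
  -- B
  have hBc : B = ((B.im : ℝ) : ℂ) * Complex.I := by
    apply Complex.ext <;> simp [hBre]
  have hKB : (0:ℝ) ≤ 13 - 2 * Real.sqrt 13 := by linarith only [hs13lt]
  have hsB2 : Real.sqrt (13 - 2 * Real.sqrt 13) ^ 2 = 13 - 2 * Real.sqrt 13 := Real.sq_sqrt hKB
  have hsBnn : (0:ℝ) ≤ Real.sqrt (13 - 2 * Real.sqrt 13) := Real.sqrt_nonneg _
  have hBlt : B.im < 4 - Real.sqrt 3 := by rw [hBim]; linarith only [hsin4, hsin2, hsin5, hsin6, hsin1le, hsin3le]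
  have hsBgt : 4 - Real.sqrt 3 < Real.sqrt (13 - 2 * Real.sqrt 13) := by
    have h1 : (4 - Real.sqrt 3)^2 < Real.sqrt (13 - 2 * Real.sqrt 13)^2 := by
      rw [hsB2]
      have e : (4 - Real.sqrt 3)^2 = 19 - 8*Real.sqrt 3 := by linear_combination hs3
      rw [e]
      linarith only [hs3gt, hs13lt]
    exact lt_of_pow_lt_pow_left₀ 2 hsBnn h1
  have hBim2 : B.im ^ 2 = 13 - 2 * Real.sqrt 13 := by
    rw [goal1, hBc] at hB2
    have h3 : ((B.im ^ 2 : ℝ) : ℂ) = ((13 - 2 * Real.sqrt 13 : ℝ) : ℂ) := by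
      push_cast
      linear_combination -hB2 + ((B.im : ℝ) : ℂ)^2 * Complex.I_sq
    exact_mod_cast h3
  have hBval : B.im = -Real.sqrt (13 - 2 * Real.sqrt 13) := by
    rcases mul_eq_zero.mp (show (B.im - Real.sqrt (13 - 2 * Real.sqrt 13))
        * (B.im + Real.sqrt (13 - 2 * Real.sqrt 13)) = 0 from by
      linear_combination hBim2 - hsB2) with h | h
    · exfalso; have h' := sub_eq_zero.mp h; linarith only [h', hBlt, hsBgt]
    · linarith only [h]
  have goal2 : B = -(Complex.I * (Real.sqrt (13 - 2 * Real.sqrt 13) : ℂ)) := by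
    rw [hBc, hBval]
    push_cast
    ring
  -- C
  have hCc : C = ((C.im : ℝ) : ℂ) * Complex.I := by
    apply Complex.ext <;> simp [hCre]
  have hKC : (0:ℝ) ≤ 13 + 2 * Real.sqrt 13 := by linarith only [hs13nn]
  have hsC2 : Real.sqrt (13 + 2 * Real.sqrt 13) ^ 2 = 13 + 2 * Real.sqrt 13 := Real.sq_sqrt hKC
  have hsCnn : (0:ℝ) ≤ Real.sqrt (13 + 2 * Real.sqrt 13) := Real.sqrt_nonneg _
  have hsCgt : (2:ℝ) < Real.sqrt (13 + 2 * Real.sqrt 13) :=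
    (Real.lt_sqrt (by norm_num)).mpr (by linarith only [hs13nn])
  have hCgt : -2 < C.im := by rw [hCim]; linarith only [hsina, hsin3, hsin4le, hsin2, hsin5, hsin6]
  have hCim2 : C.im ^ 2 = 13 + 2 * Real.sqrt 13 := by
    rw [goal1, hCc] at hC2
    have h3 : ((C.im ^ 2 : ℝ) : ℂ) = ((13 + 2 * Real.sqrt 13 : ℝ) : ℂ) := by
      push_cast
      linear_combination -hC2 + ((C.im : ℝ) : ℂ)^2 * Complex.I_sq
    exact_mod_cast h3
  have hCval : C.im = Real.sqrt (13 + 2 * Real.sqrt 13) := by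
    rcases mul_eq_zero.mp (show (C.im - Real.sqrt (13 + 2 * Real.sqrt 13))
        * (C.im + Real.sqrt (13 + 2 * Real.sqrt 13)) = 0 from by
      linear_combination hCim2 - hsC2) with h | h
    · linarith only [sub_eq_zero.mp h]
    · exfalso; have h' : C.im = -Real.sqrt (13 + 2 * Real.sqrt 13) := by linarith only [h]
      linarith only [h', hsCgt, hCgt]
  have goal3 : C = Complex.I * (Real.sqrt (13 + 2 * Real.sqrt 13) : ℂ) := by
    rw [hCc, hCval]
    ring
  rw [hAdef] at goal1; rw [hBdef] at goal2; rw [hCdef] at goal3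
  exact ⟨goal1, goal2, goal3⟩

theorem theta_alternating_sums :
    let ζ : ℂ := Complex.exp (2 * Real.pi * Complex.I / 13)
    let θ₁ := ζ + ζ^3 + ζ^9
    let θ₂ := ζ^2 + ζ^6 + ζ^5
    let θ₃ := ζ^4 + ζ^12 + ζ^10
    let θ₄ := ζ^8 + ζ^11 + ζ^7
    θ₁ + θ₃ - θ₂ - θ₄ = (Real.sqrt 13 : ℂ) ∧
    θ₁ - θ₃ - θ₂ + θ₄ = -(Complex.I * (Real.sqrt (13 - 2 * Real.sqrt 13) : ℂ)) ∧
    θ₁ - θ₃ + θ₂ - θ₄ = Complex.I * (Real.sqrt (13 + 2 * Real.sqrt 13) : ℂ) := by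
  intro ζ θ₁ θ₂ θ₃ θ₄
  exact theta_main ζ rfl
end

section
/- The real number (sin(2π/13)·sin(5π/13)·sin(6π/13)) / (sin(π/13)·sin(3π/13)·sin(4π/13)) equals (3+√13)/2. -/
open Real

theorem sine_ratio_fundamental_unit :
    (Real.sin (2*Real.pi/13) * Real.sin (5*Real.pi/13) * Real.sin (6*Real.pi/13)) /
      (Real.sin (Real.pi/13) * Real.sin (3*Real.pi/13) * Real.sin (4*Real.pi/13))
      = (3 + Real.sqrt 13) / 2 := by
  have hpi := Real.pi_pos
  set θ : ℝ := 2*Real.pi/13 with hθ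
  -- positivity of sines and cosine comparisons (small context)
  have hp1 : 0 < Real.sin θ := by
    apply Real.sin_pos_of_pos_of_lt_pi <;> rw [hθ] <;> [positivity; linarith]
  have hp2 : 0 < Real.sin (2*θ) := by
    apply Real.sin_pos_of_pos_of_lt_pi <;> rw [hθ] <;> [positivity; linarith]
  have hp5 : 0 < Real.sin (5*θ) := by
    apply Real.sin_pos_of_pos_of_lt_pi <;> rw [hθ] <;> [positivity; linarith]
  have hp6 : 0 < Real.sin (6*θ) := by
    apply Real.sin_pos_of_pos_of_lt_pi <;> rw [hθ] <;> [positivity; linarith]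
  have k1 : Real.cos (2*θ) < Real.cos (1*θ) := by
    apply Real.cos_lt_cos_of_nonneg_of_le_pi <;> rw [hθ] <;>
      [positivity; linarith; linarith]
  have k2 : Real.cos (5*θ) < Real.cos (3*θ) := by
    apply Real.cos_lt_cos_of_nonneg_of_le_pi <;> rw [hθ] <;>
      [positivity; linarith; linarith]
  have k3 : Real.cos (6*θ) < Real.cos (4*θ) := by
    apply Real.cos_lt_cos_of_nonneg_of_le_pi <;> rw [hθ] <;>
      [positivity; linarith; linarith]
  rw [one_mul] at k1
  set c : ℝ := Real.cos θ with hc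
  set s : ℝ := Real.sin θ with hsdef
  have hs : s^2 = 1 - c^2 := by
    have := Real.sin_sq_add_cos_sq θ; linarith
  -- multiple angle formulas
  have hc2 : Real.cos (2*θ) = 2*c^2 - 1 := by
    rw [show 2*θ = θ + θ by ring, Real.cos_add]
    linear_combination (-1 : ℝ) * hs
  have hs2 : Real.sin (2*θ) = 2*s*c := by
    rw [show 2*θ = θ + θ by ring, Real.sin_add]; ring
  have hc3 : Real.cos (3*θ) = 4*c^3 - 3*c := by
    rw [show 3*θ = 2*θ + θ by ring, Real.cos_add, hc2, hs2]
    linear_combination (-2*c) * hs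
  have hs3 : Real.sin (3*θ) = s*(4*c^2 - 1) := by
    rw [show 3*θ = 2*θ + θ by ring, Real.sin_add, hc2, hs2]; ring
  have hc4 : Real.cos (4*θ) = 8*c^4 - 8*c^2 + 1 := by
    rw [show 4*θ = 3*θ + θ by ring, Real.cos_add, hc3, hs3]
    linear_combination (1 - 4*c^2) * hs
  have hs4 : Real.sin (4*θ) = s*(8*c^3 - 4*c) := by
    rw [show 4*θ = 3*θ + θ by ring, Real.sin_add, hc3, hs3]; ring
  have hc5 : Real.cos (5*θ) = 16*c^5 - 20*c^3 + 5*c := by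
    rw [show 5*θ = 4*θ + θ by ring, Real.cos_add, hc4, hs4]
    linear_combination (4*c - 8*c^3) * hs
  have hs5 : Real.sin (5*θ) = s*(16*c^4 - 12*c^2 + 1) := by
    rw [show 5*θ = 4*θ + θ by ring, Real.sin_add, hc4, hs4]; ring
  have hc6 : Real.cos (6*θ) = 32*c^6 - 48*c^4 + 18*c^2 - 1 := by
    rw [show 6*θ = 5*θ + θ by ring, Real.cos_add, hc5, hs5]
    linear_combination (-(16*c^4 - 12*c^2 + 1)) * hs
  have hs6 : Real.sin (6*θ) = s*(32*c^5 - 32*c^3 + 6*c) := by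
    rw [show 6*θ = 5*θ + θ by ring, Real.sin_add, hc5, hs5]; ring
  have hs7 : Real.sin (7*θ) = s*(64*c^6 - 80*c^4 + 24*c^2 - 1) := by
    rw [show 7*θ = 6*θ + θ by ring, Real.sin_add, hc6, hs6]; ring
  -- minimal polynomial of c
  have hP : 64*c^6 + 32*c^5 - 80*c^4 - 32*c^3 + 24*c^2 + 6*c - 1 = 0 := by
    have h7 : Real.sin (7*θ) = -Real.sin (6*θ) := by
      rw [show 7*θ = 2*Real.pi - 6*θ by rw [hθ]; ring]
      exact Real.sin_two_pi_sub (6*θ)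
    rw [hs7, hs6] at h7
    have key : s * (64*c^6 + 32*c^5 - 80*c^4 - 32*c^3 + 24*c^2 + 6*c - 1) = s * 0 := by
      rw [mul_zero]; linear_combination h7
    exact mul_left_cancel₀ hp1.ne' key
  -- sqrt 13
  have hD2 : (-64*c^6 - 32*c^5 + 112*c^4 + 48*c^3 - 56*c^2 - 14*c + 6)^2 = 13 := by
    linear_combination (64*c^6 + 32*c^5 - 144*c^4 - 64*c^3 + 104*c^2 + 30*c - 23) * hP
  have hDpos : 0 < -64*c^6 - 32*c^5 + 112*c^4 + 48*c^3 - 56*c^2 - 14*c + 6 := by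
    rw [hc2] at k1
    rw [hc3, hc5] at k2
    rw [hc4, hc6] at k3
    linarith
  have hsqrt : Real.sqrt 13 = -64*c^6 - 32*c^5 + 112*c^4 + 48*c^3 - 56*c^2 - 14*c + 6 := by
    rw [← hD2, Real.sqrt_sq hDpos.le]
  -- rewrite the goal sines in terms of θ
  have e5 : Real.sin (5*Real.pi/13) = Real.sin (4*θ) := by
    rw [show 4*θ = Real.pi - 5*Real.pi/13 by rw [hθ]; ring, Real.sin_pi_sub]
  have e6 : Real.sin (6*Real.pi/13) = Real.sin (3*θ) := by
    rw [show (6*Real.pi/13 : ℝ) = 3*θ by rw [hθ]; ring]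
  have e1' : Real.sin (Real.pi/13) = Real.sin (6*θ) := by
    rw [show 6*θ = Real.pi - Real.pi/13 by rw [hθ]; ring, Real.sin_pi_sub]
  have e3' : Real.sin (3*Real.pi/13) = Real.sin (5*θ) := by
    rw [show 5*θ = Real.pi - 3*Real.pi/13 by rw [hθ]; ring, Real.sin_pi_sub]
  have e4' : Real.sin (4*Real.pi/13) = Real.sin (2*θ) := by
    rw [show (4*Real.pi/13 : ℝ) = 2*θ by rw [hθ]; ring]
  rw [e5, e6, e1', e3', e4']
  have hden : (0:ℝ) < Real.sin (6*θ) * Real.sin (5*θ) * Real.sin (2*θ) := by positivity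
  rw [div_eq_div_iff hden.ne' (by norm_num : (2:ℝ) ≠ 0)]
  rw [hs2, hs3, hs4, hs5, hs6, hsqrt]
  linear_combination (s^3 * (1024*c^10 - 2304*c^8 + 1792*c^6 - 64*c^5 - 560*c^4
    + 48*c^3 + 60*c^2 - 8*c)) * hP
end

section
/- Let M and N be the 3×3 circulant-type matrices over ℂ with entries built from ζ = e^{2πi/13}: M has rows the cyclic shifts of (ζ-ζ¹², ζ³-ζ¹⁰, ζ⁹-ζ⁴) and N has rows the cyclic shifts of (ζ⁵-ζ⁸, ζ²-ζ¹¹, ζ⁶-ζ⁷). Then MN = NM = -√13·I and M² + N² = -13·I. -/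
open Complex Real

noncomputable def z13 : ℂ := Complex.exp (2 * Real.pi * Complex.I / 13)

lemma z13_pow_13 : z13 ^ 13 = 1 := by
  rw [z13, ← Complex.exp_nat_mul]
  rw [show (13:ℕ) * (2 * (Real.pi:ℂ) * Complex.I / 13) = 2 * Real.pi * Complex.I by
    push_cast; ring]
  exact Complex.exp_two_pi_mul_I

lemma z13_ne_one : z13 ≠ 1 := by
  rw [z13]
  intro h
  rw [Complex.exp_eq_one_iff] at h
  obtain ⟨n, hn⟩ := h
  have hπ : (Real.pi : ℂ) ≠ 0 := by exact_mod_cast Real.pi_ne_zero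
  have hne : 2 * (Real.pi:ℂ) * Complex.I ≠ 0 := by
    simp [hπ, Complex.I_ne_zero]
  have h3 : ((13 * n : ℤ) : ℂ) * (2 * Real.pi * Complex.I)
      = (1:ℂ) * (2 * Real.pi * Complex.I) := by
    push_cast
    linear_combination (-13:ℂ) * hn
  have h1 : ((13 * n : ℤ) : ℂ) = 1 := mul_right_cancel₀ hne h3
  have : (13 * n : ℤ) = 1 := by exact_mod_cast h1
  omega

lemma z13_sum : 1 + z13 + z13^2 + z13^3 + z13^4 + z13^5 + z13^6 + z13^7 + z13^8
    + z13^9 + z13^10 + z13^11 + z13^12 = 0 := by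
  have h : (z13 - 1) * (1 + z13 + z13^2 + z13^3 + z13^4 + z13^5 + z13^6 + z13^7 + z13^8
      + z13^9 + z13^10 + z13^11 + z13^12) = 0 := by
    linear_combination z13_pow_13
  rcases mul_eq_zero.mp h with h | h
  · exact absurd (sub_eq_zero.mp h) z13_ne_one
  · exact h

lemma z13_pow_eq (k : ℕ) :
    z13 ^ k = Complex.exp (((2 * Real.pi * k / 13 : ℝ) : ℂ) * Complex.I) := by
  rw [z13, ← Complex.exp_nat_mul]
  congr 1
  push_cast
  ring

lemma z13_pair (k : ℕ) (hk : k ≤ 13) :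
    z13 ^ k + z13 ^ (13 - k) = 2 * ((Real.cos (2 * Real.pi * k / 13) : ℝ) : ℂ) := by
  have h1 : z13 ^ (13 - k) * z13 ^ k = 1 := by
    rw [← pow_add, Nat.sub_add_cancel hk, z13_pow_13]
  have h2 : z13 ^ (13 - k) = (z13 ^ k)⁻¹ := eq_inv_of_mul_eq_one_left h1
  rw [h2, z13_pow_eq k, ← Complex.exp_neg, ← neg_mul, Complex.exp_mul_I, Complex.exp_mul_I,
    Complex.cos_neg, Complex.sin_neg, Complex.ofReal_cos]
  ring

noncomputable def gr : ℝ :=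
  2 * (Real.cos (2 * Real.pi * 1 / 13) + Real.cos (2 * Real.pi * 3 / 13)
      + Real.cos (2 * Real.pi * 4 / 13) - Real.cos (2 * Real.pi * 2 / 13)
      - Real.cos (2 * Real.pi * 5 / 13) - Real.cos (2 * Real.pi * 6 / 13))

lemma g_eq_gr :
    z13 + z13^12 + z13^3 + z13^10 + z13^4 + z13^9 - z13^2 - z13^11 - z13^5 - z13^8
      - z13^6 - z13^7 = ((gr : ℝ) : ℂ) := by
  have p1 := z13_pair 1 (by norm_num)
  have p2 := z13_pair 2 (by norm_num)
  have p3 := z13_pair 3 (by norm_num)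
  have p4 := z13_pair 4 (by norm_num)
  have p5 := z13_pair 5 (by norm_num)
  have p6 := z13_pair 6 (by norm_num)
  norm_num at p1 p2 p3 p4 p5 p6
  rw [gr]
  push_cast
  norm_num
  linear_combination p1 + p3 + p4 - p2 - p5 - p6

lemma gr_sq : gr ^ 2 = 13 := by
  have hc : ((gr : ℝ) : ℂ) ^ 2 = 13 := by
    rw [← g_eq_gr]
    linear_combination ((12:ℂ) * 1 + (-1:ℂ) * z13 + (-2:ℂ) * z13^2 + (1:ℂ) * z13^3
      + (-4:ℂ) * z13^4 + (-1:ℂ) * z13^5 + (2:ℂ) * z13^6 + (-3:ℂ) * z13^7 + (3:ℂ) * z13^9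
      + (-2:ℂ) * z13^10 + (1:ℂ) * z13^11) * z13_pow_13 + (-1 : ℂ) * z13_sum
  exact_mod_cast hc

lemma gr_pos : 0 < gr := by
  have hπ := Real.pi_pos
  have h12 : Real.cos (2 * Real.pi * 2 / 13) < Real.cos (2 * Real.pi * 1 / 13) := by
    apply Real.cos_lt_cos_of_nonneg_of_le_pi (by positivity) (by nlinarith) (by nlinarith)
  have h3 : 0 ≤ Real.cos (2 * Real.pi * 3 / 13) := by
    apply Real.cos_nonneg_of_mem_Icc
    constructor <;> nlinarith
  have h45 : Real.cos (2 * Real.pi * 5 / 13) ≤ Real.cos (2 * Real.pi * 4 / 13) := by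
    apply Real.cos_le_cos_of_nonneg_of_le_pi (by positivity) (by nlinarith) (by nlinarith)
  have h6 : Real.cos (2 * Real.pi * 6 / 13) ≤ 0 := by
    apply Real.cos_nonpos_of_pi_div_two_le_of_le (by nlinarith) (by nlinarith)
  rw [gr]
  linarith

lemma g_eq_sqrt :
    z13 + z13^12 + z13^3 + z13^10 + z13^4 + z13^9 - z13^2 - z13^11 - z13^5 - z13^8
      - z13^6 - z13^7 = ((Real.sqrt 13 : ℝ) : ℂ) := by
  rw [g_eq_gr]
  congr 1
  rw [show (13:ℝ) = gr ^ 2 from gr_sq.symm, Real.sqrt_sq gr_pos.le]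

lemma MN_lem :
    (!![z13 - z13^12, z13^3 - z13^10, z13^9 - z13^4;
       z13^3 - z13^10, z13^9 - z13^4, z13 - z13^12;
       z13^9 - z13^4, z13 - z13^12, z13^3 - z13^10] *
     !![z13^5 - z13^8, z13^2 - z13^11, z13^6 - z13^7;
       z13^2 - z13^11, z13^6 - z13^7, z13^5 - z13^8;
       z13^6 - z13^7, z13^5 - z13^8, z13^2 - z13^11])
    = (-(Real.sqrt 13 : ℂ)) • (1 : Matrix (Fin 3) (Fin 3) ℂ) := by
  have h13 := z13_pow_13
  have hg := g_eq_sqrt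
  ext i j
  fin_cases i <;> fin_cases j <;>
    simp [Matrix.mul_apply, Fin.sum_univ_succ, Matrix.one_apply] <;>
    first
      | linear_combination (-1:ℂ) * hg
          + ((-1:ℂ)*z13 + z13^2 - z13^3 - z13^4 + z13^7 + z13^8) * h13
      | linear_combination ((-1:ℂ)*z13^3 + z13^10) * h13
      | linear_combination (z13^6 - z13^7) * h13

lemma NM_lem :
    (!![z13^5 - z13^8, z13^2 - z13^11, z13^6 - z13^7;
       z13^2 - z13^11, z13^6 - z13^7, z13^5 - z13^8;
       z13^6 - z13^7, z13^5 - z13^8, z13^2 - z13^11] *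
     !![z13 - z13^12, z13^3 - z13^10, z13^9 - z13^4;
       z13^3 - z13^10, z13^9 - z13^4, z13 - z13^12;
       z13^9 - z13^4, z13 - z13^12, z13^3 - z13^10])
    = (-(Real.sqrt 13 : ℂ)) • (1 : Matrix (Fin 3) (Fin 3) ℂ) := by
  have h13 := z13_pow_13
  have hg := g_eq_sqrt
  ext i j
  fin_cases i <;> fin_cases j <;>
    simp [Matrix.mul_apply, Fin.sum_univ_succ, Matrix.one_apply] <;>
    first
      | linear_combination (-1:ℂ) * hg
          + ((-1:ℂ)*z13 + z13^2 - z13^3 - z13^4 + z13^7 + z13^8) * h13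
      | linear_combination ((-1:ℂ)*z13^3 + z13^10) * h13
      | linear_combination (z13^6 - z13^7) * h13

set_option maxHeartbeats 1600000 in
lemma SS_lem :
    (!![z13 - z13^12, z13^3 - z13^10, z13^9 - z13^4;
       z13^3 - z13^10, z13^9 - z13^4, z13 - z13^12;
       z13^9 - z13^4, z13 - z13^12, z13^3 - z13^10] *
     !![z13 - z13^12, z13^3 - z13^10, z13^9 - z13^4;
       z13^3 - z13^10, z13^9 - z13^4, z13 - z13^12;
       z13^9 - z13^4, z13 - z13^12, z13^3 - z13^10] +
     !![z13^5 - z13^8, z13^2 - z13^11, z13^6 - z13^7;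
       z13^2 - z13^11, z13^6 - z13^7, z13^5 - z13^8;
       z13^6 - z13^7, z13^5 - z13^8, z13^2 - z13^11] *
     !![z13^5 - z13^8, z13^2 - z13^11, z13^6 - z13^7;
       z13^2 - z13^11, z13^6 - z13^7, z13^5 - z13^8;
       z13^6 - z13^7, z13^5 - z13^8, z13^2 - z13^11])
    = (-13 : ℂ) • (1 : Matrix (Fin 3) (Fin 3) ℂ) := by
  have h13 := z13_pow_13
  have hsum := z13_sum
  ext i j
  fin_cases i <;> fin_cases j <;>
    simp [Matrix.mul_apply, Fin.sum_univ_succ, Matrix.one_apply, Matrix.add_apply] <;>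
    first
      | linear_combination ((-12:ℂ) + z13 + z13^3 + z13^5 + z13^7 + z13^9 + z13^11) * h13
          + hsum
      | linear_combination ((-1:ℂ)*z13^4 + z13^5 - z13^8 + z13^9) * h13

theorem circulant_matrices_M_N_identities :
    let ζ : ℂ := Complex.exp (2 * Real.pi * Complex.I / 13)
    let M : Matrix (Fin 3) (Fin 3) ℂ :=
      !![ζ - ζ^12, ζ^3 - ζ^10, ζ^9 - ζ^4;
         ζ^3 - ζ^10, ζ^9 - ζ^4, ζ - ζ^12;
         ζ^9 - ζ^4, ζ - ζ^12, ζ^3 - ζ^10]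
    let N : Matrix (Fin 3) (Fin 3) ℂ :=
      !![ζ^5 - ζ^8, ζ^2 - ζ^11, ζ^6 - ζ^7;
         ζ^2 - ζ^11, ζ^6 - ζ^7, ζ^5 - ζ^8;
         ζ^6 - ζ^7, ζ^5 - ζ^8, ζ^2 - ζ^11]
    M * N = (-(Real.sqrt 13 : ℂ)) • (1 : Matrix (Fin 3) (Fin 3) ℂ) ∧
    N * M = (-(Real.sqrt 13 : ℂ)) • (1 : Matrix (Fin 3) (Fin 3) ℂ) ∧
    M * M + N * N = (-13 : ℂ) • (1 : Matrix (Fin 3) (Fin 3) ℂ) := by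
  exact ⟨MN_lem, NM_lem, SS_lem⟩
end
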